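/- The von Neumann reduced entropy S_vN satisfies the superposition axiom (P4): if ψ₁,…,ψ_m are mutually Schmidt orthogonal unit vectors in H₁ ⊗ H₂ and λ₁,…,λ_m ∈ ℂ with ∑ᵢ |λᵢ|² = 1, then S_vN(∑ᵢ λᵢ ψᵢ) = −∑ᵢ |λᵢ|² ln|λᵢ|² + ∑ᵢ |λᵢ|² S_vN(ψᵢ). -/

import Mathlib

open scoped BigOperators ComplexOrder
open Matrix

noncomputable section

/-- Finite-dimensional complex Hilbert space of dimension `m`. -/
abbrev H (m : ℕ) := EuclideanSpace ℂ (Fin m)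

/-- The tensor product `H m ⊗ H n`, realized as `EuclideanSpace ℂ (Fin m × Fin n)`. -/
abbrev HT (m n : ℕ) := EuclideanSpace ℂ (Fin m × Fin n)

/-- Elementary tensor `a ⊗ b`. -/
def tensorVec {m n : ℕ} (a : H m) (b : H n) : HT m n :=
  WithLp.toLp 2 fun p : Fin m × Fin n => a p.1 * b p.2

/-- The projection `|ψ⟩⟨ψ|` as a matrix. -/
def proj {m n : ℕ} (ψ : HT m n) : Matrix (Fin m × Fin n) (Fin m × Fin n) ℂ :=
  Matrix.of fun x y => ψ x * (starRingEnd ℂ) (ψ y)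

/-- The projection `|a⟩⟨a|` on a single factor. -/
def proj1 {m : ℕ} (a : H m) : Matrix (Fin m) (Fin m) ℂ :=
  Matrix.of fun i j => a i * (starRingEnd ℂ) (a j)

/-- Partial trace over the second factor. -/
def ptrace2 {m n : ℕ} (M : Matrix (Fin m × Fin n) (Fin m × Fin n) ℂ) :
    Matrix (Fin m) (Fin m) ℂ :=
  Matrix.of fun i j => ∑ k : Fin n, M (i, k) (j, k)

/-- Partial trace over the first factor. -/
def ptrace1 {m n : ℕ} (M : Matrix (Fin m × Fin n) (Fin m × Fin n) ℂ) :
    Matrix (Fin n) (Fin n) ℂ :=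
  Matrix.of fun i j => ∑ k : Fin m, M (k, i) (k, j)

/-- Von Neumann entropy `-Tr(ρ ln ρ)` of a Hermitian matrix, via its eigenvalues. -/
def vnEnt {k : ℕ} {M : Matrix (Fin k) (Fin k) ℂ} (h : M.IsHermitian) : ℝ :=
  ∑ i, Real.negMulLog (h.eigenvalues i)

/-- Kronecker product of square matrices. -/
def kron {m n : ℕ} (A : Matrix (Fin m) (Fin m) ℂ) (B : Matrix (Fin n) (Fin n) ℂ) :
    Matrix (Fin m × Fin n) (Fin m × Fin n) ℂ :=
  Matrix.of fun p q => A p.1 q.1 * B p.2 q.2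

/-- Action of a matrix on a vector. -/
def matVec {m n : ℕ} (M : Matrix (Fin m × Fin n) (Fin m × Fin n) ℂ) (ψ : HT m n) :
    HT m n := WithLp.toLp 2 fun p : Fin m × Fin n => ∑ q, M p q * ψ q

/-- The canonical pure state with Schmidt coefficients `μ`. -/
def stdVec {k : ℕ} (μ : Fin k → ℝ) : HT k k :=
  WithLp.toLp 2 fun p : Fin k × Fin k => if p.1 = p.2 then (Real.sqrt (μ p.1) : ℂ) else 0

/-- Strong Schmidt orthogonality: the supports of both reduced density matrices
are orthogonal. -/
def SchmidtOrthogonal {m n : ℕ} (ψ φ : HT m n) : Prop :=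
  ptrace2 (proj ψ) * ptrace2 (proj φ) = 0 ∧ ptrace1 (proj ψ) * ptrace1 (proj φ) = 0

/-- Image of `ψ` under the tensor product of two isometric embeddings. -/
def tensorMap {m n m' n' : ℕ} (f : H m →ₗᵢ[ℂ] H m') (g : H n →ₗᵢ[ℂ] H n')
    (ψ : HT m n) : HT m' n' :=
  WithLp.toLp 2 fun p : Fin m' × Fin n' => ∑ q : Fin m × Fin n,
    ψ q * f (EuclideanSpace.single q.1 1) p.1 * g (EuclideanSpace.single q.2 1) p.2

/-- Finite probability distribution. -/
def IsProbDist {k : ℕ} (p : Fin k → ℝ) : Prop := (∀ i, 0 ≤ p i) ∧ ∑ i, p i = 1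

/-- Multiset of nonzero Schmidt coefficients of `ψ` (eigenvalues of the reduced
density matrix). -/
def schmidtMultiset {m n : ℕ} (ψ : HT m n) (h : (ptrace2 (proj ψ)).IsHermitian) :
    Multiset ℝ :=
  (Finset.univ.val.map h.eigenvalues).filter (· ≠ 0)

/-- Trace norm of a matrix. -/
def trNorm {a b : ℕ} (A : Matrix (Fin a) (Fin b) ℂ) : ℝ :=
  ∑ i, Real.sqrt ((Matrix.posSemidef_conjTranspose_mul_self A).1.eigenvalues i)

/-- The greatest cross norm. -/
def gcn {m n : ℕ} (M : Matrix (Fin m × Fin n) (Fin m × Fin n) ℂ) : ℝ :=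
  sInf { t : ℝ | ∃ (k : ℕ) (x : Fin k → Matrix (Fin m) (Fin m) ℂ)
    (y : Fin k → Matrix (Fin n) (Fin n) ℂ),
    M = ∑ i, kron (x i) (y i) ∧ t = ∑ i, trNorm (x i) * trNorm (y i) }

/-- Density operator. -/
def IsDensity {d : Type*} [Fintype d] [DecidableEq d] (M : Matrix d d ℂ) : Prop :=
  M.PosSemidef ∧ M.trace = 1

/-!
Schmidt orthogonality of the `ψᵢ` kills the cross terms, so the reduced state of `∑ λᵢ ψᵢ` is
`ρ = ∑ |λᵢ|² ρᵢ` with `ρᵢ ρⱼ = 0` for `i ≠ j`. For matrices with `A B = 0` one has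
`(X - A)(X - B) = X (X - A - B)`, so the spectrum of `ρ` is, up to zeros, the union of the spectra
of the `|λᵢ|² ρᵢ`. Since `Tr ρᵢ = 1`, the identity `η(xy) = y η(x) + x η(y)` for
`η(x) = -x ln x` splits the entropy of each block into `η(|λᵢ|²) + |λᵢ|² S(ρᵢ)`.
-/

open Polynomial

namespace Matrix

variable {n : Type*} [Fintype n]

section charpolyRootSum

variable {R M : Type*} [DecidableEq n]

theorem charpoly_mul_charpoly_of_mul_eq_zero [CommRing R] {A B : Matrix n n R}
    (hAB : A * B = 0) :
    A.charpoly * B.charpoly = X ^ Fintype.card n * (A + B).charpoly := by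
  have hmap : (C : R →+* R[X]).mapMatrix A * (C : R →+* R[X]).mapMatrix B = 0 := by
    rw [← map_mul, hAB, map_zero]
  have key : charmatrix A * charmatrix B = scalar n (X : R[X]) * charmatrix (A + B) := by
    simp only [charmatrix, map_add, sub_mul, mul_sub, add_mul, hmap,
      (scalar_commute (X : R[X]) (Commute.all _) _).eq]
    abel
  simpa [charpoly, det_mul] using congrArg det key

variable [CommRing R] [IsDomain R] [AddCommMonoid M] (f : R → M)

/-- Unlike `vnEnt`, this needs no Hermiticity proof, so it can be split along `A * B = 0`. -/
def charpolyRootSum (A : Matrix n n R) : M := (A.charpoly.roots.map f).sum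

variable {f}

theorem charpolyRootSum_eq_sum_of_charpoly_eq {A : Matrix n n R} {d : n → R}
    (h : A.charpoly = ∏ i, (X - C (d i))) : charpolyRootSum f A = ∑ i, f (d i) := by
  rw [charpolyRootSum, h,
    roots_prod _ _ (Finset.prod_ne_zero_iff.mpr fun i _ => X_sub_C_ne_zero _)]
  simp [Multiset.map_map, Finset.sum_map_val]

theorem charpolyRootSum_zero (hf : f 0 = 0) : charpolyRootSum f (0 : Matrix n n R) = 0 := by
  simp [charpolyRootSum, charpoly_zero, Multiset.map_nsmul, Multiset.sum_nsmul, hf]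

theorem charpolyRootSum_add (hf : f 0 = 0) {A B : Matrix n n R} (hAB : A * B = 0) :
    charpolyRootSum f (A + B) = charpolyRootSum f A + charpolyRootSum f B := by
  have hroots := congrArg roots (charpoly_mul_charpoly_of_mul_eq_zero hAB)
  rw [roots_mul ((charpoly_monic A).mul (charpoly_monic B)).ne_zero,
    roots_mul ((monic_X_pow _).mul (charpoly_monic _)).ne_zero, roots_X_pow] at hroots
  simpa [charpolyRootSum, Multiset.map_nsmul, Multiset.sum_nsmul, hf]
    using (congrArg (fun s => (s.map f).sum) hroots).symm

theorem charpolyRootSum_sum (hf : f 0 = 0) {ι : Type*} (s : Finset ι) (A : ι → Matrix n n R)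
    (hA : Pairwise fun i j => A i * A j = 0) :
    charpolyRootSum f (∑ i ∈ s, A i) = ∑ i ∈ s, charpolyRootSum f (A i) := by
  classical
  induction s using Finset.induction_on with
  | empty => simpa using charpolyRootSum_zero hf
  | insert i s hi ih =>
    have hmul : A i * ∑ j ∈ s, A j = 0 := by
      rw [Finset.mul_sum]
      exact Finset.sum_eq_zero fun j hj => hA (ne_of_mem_of_not_mem hj hi).symm
    rw [Finset.sum_insert hi, Finset.sum_insert hi, charpolyRootSum_add hf hmul, ih]

end charpolyRootSum

section Gram

variable {l 𝕜 : Type*} [Fintype l] [RCLike 𝕜]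

theorem mul_conjTranspose_eq_zero_of_gram_mul_gram_eq_zero {A B : Matrix l n 𝕜}
    (h : (Aᴴ * A) * (Bᴴ * B) = 0) : A * Bᴴ = 0 := by
  rwa [conjTranspose_mul_self_mul_eq_zero, mul_conjTranspose_mul_self_eq_zero] at h

theorem sum_smul_mul_conjTranspose_sum_smul {ι : Type*} [Fintype ι] (c : ι → 𝕜)
    (A : ι → Matrix l n 𝕜) (hA : Pairwise fun i j => A i * (A j)ᴴ = 0) :
    (∑ i, c i • A i) * (∑ i, c i • A i)ᴴ = ∑ i, ‖c i‖ ^ 2 • (A i * (A i)ᴴ) := by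
  classical
  simp only [conjTranspose_sum, conjTranspose_smul, Matrix.sum_mul, Matrix.mul_sum,
    Matrix.smul_mul, Matrix.mul_smul]
  refine Finset.sum_congr rfl fun i _ => ?_
  rw [Finset.sum_eq_single i (fun j _ hji => by rw [hA hji, smul_zero]) (by simp), smul_smul,
    RCLike.star_def, mul_comm, RCLike.mul_conj, RCLike.real_smul_eq_coe_smul (K := 𝕜),
    RCLike.ofReal_pow]

end Gram

end Matrix

namespace Matrix.IsHermitian

variable {n 𝕜 M : Type*} [Fintype n] [DecidableEq n] [RCLike 𝕜] [AddCommMonoid M]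
  {A : Matrix n n 𝕜}

theorem charpolyRootSum_eq (hA : A.IsHermitian) (f : 𝕜 → M) :
    charpolyRootSum f A = ∑ i, f (hA.eigenvalues i) :=
  charpolyRootSum_eq_sum_of_charpoly_eq hA.charpoly_eq

theorem charpolyRootSum_smul (hA : A.IsHermitian) (f : 𝕜 → M) (c : ℝ) :
    charpolyRootSum f (c • A) = ∑ i, f (c * hA.eigenvalues i : ℝ) := by
  refine charpolyRootSum_eq_sum_of_charpoly_eq ?_
  rw [← cfc_const_mul_id c A hA.isSelfAdjoint]
  exact hA.charpoly_cfc_eq _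

end Matrix.IsHermitian

theorem vnEnt_eq_charpolyRootSum {k : ℕ} {M : Matrix (Fin k) (Fin k) ℂ} (h : M.IsHermitian) :
    vnEnt h = charpolyRootSum (fun z : ℂ => Real.negMulLog z.re) M := by
  simp [vnEnt, h.charpolyRootSum_eq]

theorem charpolyRootSum_negMulLog_smul {k : ℕ} {ρ : Matrix (Fin k) (Fin k) ℂ}
    (hρ : ρ.IsHermitian) (htr : ρ.trace = 1) (c : ℝ) :
    charpolyRootSum (fun z : ℂ => Real.negMulLog z.re) (c • ρ)
      = Real.negMulLog c + c * vnEnt hρ := by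
  have hsum : ∑ i, hρ.eigenvalues i = 1 := by
    simpa [← Complex.ofReal_sum] using hρ.trace_eq_sum_eigenvalues.symm.trans htr
  rw [hρ.charpolyRootSum_smul]
  simp only [RCLike.ofReal_eq_complex_ofReal, Complex.ofReal_re, Real.negMulLog_mul,
    Finset.sum_add_distrib, ← Finset.sum_mul, ← Finset.mul_sum, hsum, one_mul, vnEnt]

@[simps]
def coeffMatrix {m n : ℕ} : HT m n →ₗ[ℂ] Matrix (Fin m) (Fin n) ℂ where
  toFun ψ := Matrix.of fun i j => ψ (i, j)
  map_add' _ _ := rfl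
  map_smul' _ _ := rfl

section ReducedStates

variable {m n : ℕ}

theorem ptrace2_proj (ψ : HT m n) : ptrace2 (proj ψ) = coeffMatrix ψ * (coeffMatrix ψ)ᴴ := by
  ext i j
  simp [ptrace2, proj, Matrix.mul_apply]

theorem ptrace1_proj (ψ : HT m n) :
    ptrace1 (proj ψ) = ((coeffMatrix ψ)ᴴ * coeffMatrix ψ)ᵀ := by
  ext i j
  simp [ptrace1, proj, Matrix.mul_apply, mul_comm]

theorem trace_ptrace2_proj (ψ : HT m n) : (ptrace2 (proj ψ)).trace = (‖ψ‖ ^ 2 : ℝ) := by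
  rw [EuclideanSpace.norm_sq_eq, Complex.ofReal_sum, Fintype.sum_prod_type]
  simp [ptrace2, proj, Matrix.trace, Complex.mul_conj']

theorem SchmidtOrthogonal.coeffMatrix_mul_conjTranspose_eq_zero {ψ φ : HT m n}
    (h : SchmidtOrthogonal φ ψ) : coeffMatrix ψ * (coeffMatrix φ)ᴴ = 0 := by
  have h₁ := h.2
  rw [ptrace1_proj, ptrace1_proj, ← Matrix.transpose_mul, Matrix.transpose_eq_zero] at h₁
  exact Matrix.mul_conjTranspose_eq_zero_of_gram_mul_gram_eq_zero h₁

theorem ptrace2_proj_sum_smul {k : ℕ} (ψ : Fin k → HT m n)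
    (horth : Pairwise fun i j => SchmidtOrthogonal (ψ i) (ψ j)) (lam : Fin k → ℂ) :
    ptrace2 (proj (∑ i, lam i • ψ i)) = ∑ i, ‖lam i‖ ^ 2 • ptrace2 (proj (ψ i)) := by
  simp only [ptrace2_proj, map_sum, map_smul]
  exact Matrix.sum_smul_mul_conjTranspose_sum_smul _ _
    fun i j hij => (horth hij.symm).coeffMatrix_mul_conjTranspose_eq_zero

end ReducedStates

theorem svn_satisfies_P4_general {m n k : ℕ} (ψ : Fin k → HT m n)
    (hunit : ∀ i, ‖ψ i‖ = 1)
    (horth : ∀ i j, i ≠ j → SchmidtOrthogonal (ψ i) (ψ j))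
    (lam : Fin k → ℂ)
    (h : (ptrace2 (proj (∑ i, lam i • ψ i))).IsHermitian)
    (hi : ∀ i, (ptrace2 (proj (ψ i))).IsHermitian) :
    vnEnt h = (∑ i, Real.negMulLog (‖lam i‖ ^ 2))
      + ∑ i, ‖lam i‖ ^ 2 * vnEnt (hi i) := by
  have hblocks : Pairwise fun i j =>
      (‖lam i‖ ^ 2 • ptrace2 (proj (ψ i))) * (‖lam j‖ ^ 2 • ptrace2 (proj (ψ j))) = 0 :=
    fun i j hij => by simp only [Matrix.smul_mul, Matrix.mul_smul, (horth i j hij).1, smul_zero]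
  rw [vnEnt_eq_charpolyRootSum, ptrace2_proj_sum_smul ψ (fun i j => horth i j),
    charpolyRootSum_sum (by simp) _ _ hblocks, ← Finset.sum_add_distrib]
  refine Finset.sum_congr rfl fun i _ => charpolyRootSum_negMulLog_smul (hi i) ?_ _
  simp [trace_ptrace2_proj, hunit i]

/-- The von Neumann reduced entropy satisfies the superposition axiom (P4) for
mutually Schmidt orthogonal pure states. -/
theorem svn_satisfies_P4 {m n k : ℕ} (ψ : Fin k → HT m n)
    (hunit : ∀ i, ‖ψ i‖ = 1)
    (horth : ∀ i j, i ≠ j → SchmidtOrthogonal (ψ i) (ψ j))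
    (lam : Fin k → ℂ) (hlam : (∑ i, ‖lam i‖ ^ 2) = 1)
    (h : (ptrace2 (proj (∑ i, lam i • ψ i))).IsHermitian)
    (hi : ∀ i, (ptrace2 (proj (ψ i))).IsHermitian) :
    vnEnt h = (∑ i, Real.negMulLog (‖lam i‖ ^ 2))
      + ∑ i, ‖lam i‖ ^ 2 * vnEnt (hi i) :=
  svn_satisfies_P4_general ψ hunit horth lam h hi

end
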